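/- arXiv:2404.01697 — 6 statements merged into one kernel-verified Lean document; each statement's English description precedes it below -/
import Mathlib

section
/- Let w be a random vector in ℝ^Q with distribution s(w) = (1/2)·(N(w | μ, diag(σ²)) + N(−w | μ, diag(σ²))), i.e., a symmetrized Gaussian. Then for any x, x' ∈ ℝ^Q, E[cos(2π wᵀ(x − x'))] = exp(−2π² ‖σ ⊙ (x − x')‖²) · cos(2π μᵀ(x − x')), where ⊙ denotes entrywise product. -/
/-!
Since cosine is even and Lebesgue measure is invariant under `w ↦ -w`, symmetrizing the density
does not change the integral, so it suffices to integrate `cos ⟨w, t⟩` against the product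
Gaussian density, where `t = 2π (x - x')`. Writing `cos ⟨w, t⟩ = Re exp (i ⟨w, t⟩)`, the
integrand factors over the coordinates, and Fubini turns the integral into a product of
one-dimensional Gaussian characteristic functions `exp (i tᵢ μᵢ - vᵢ tᵢ² / 2)`.
-/

open Real MeasureTheory

/-- One-dimensional Gaussian density with mean `μ` and variance `v`. -/
noncomputable def gaussPDF (μ v x : ℝ) : ℝ :=
  (Real.sqrt (2 * Real.pi * v))⁻¹ * Real.exp (-(x - μ) ^ 2 / (2 * v))

open Complex ProbabilityTheory

lemma integral_mul_half_add_comp_neg_of_even {E : Type*} [MeasurableSpace E] [AddGroup E]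
    [MeasurableNeg E] {μ : Measure E} [μ.IsNegInvariant] {f p : E → ℝ} (hf : ∀ w, f (-w) = f w)
    (hfp : Integrable (fun w ↦ f w * p w) μ) :
    ∫ w, f w * ((1 / 2) * (p w + p (-w))) ∂μ = ∫ w, f w * p w ∂μ := by
  have hsplit (w : E) : f w * ((1 / 2) * (p w + p (-w))) =
      (1 / 2) * (f w * p w) + (1 / 2) * (f (-w) * p (-w)) := by
    rw [hf]; ring
  simp_rw [hsplit]
  rw [integral_add (hfp.const_mul _) (hfp.comp_neg.const_mul _), integral_const_mul,
    integral_const_mul, integral_neg_eq_self (fun w ↦ f w * p w)]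
  ring

lemma gaussPDF_eq_gaussianPDFReal (m : ℝ) {v : ℝ} (hv : 0 ≤ v) :
    gaussPDF m v = gaussianPDFReal m ⟨v, hv⟩ :=
  rfl

lemma integrable_gaussPDF (m : ℝ) {v : ℝ} (hv : 0 ≤ v) : Integrable (gaussPDF m v) := by
  rw [gaussPDF_eq_gaussianPDFReal m hv]
  exact integrable_gaussianPDFReal m _

lemma integrable_cexp_mul_I_mul_gaussPDF (m : ℝ) {v : ℝ} (hv : 0 ≤ v) (t : ℝ) :
    Integrable (fun y : ℝ ↦ cexp (t * y * I) * gaussPDF m v y) := by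
  refine (integrable_gaussPDF m hv).ofReal.bdd_mul (c := 1) (by fun_prop)
    (ae_of_all _ fun y ↦ ?_)
  rw [← ofReal_mul, norm_exp_ofReal_mul_I]

lemma integral_cexp_mul_I_mul_gaussPDF (m : ℝ) {v : ℝ} (hv : 0 < v) (t : ℝ) :
    ∫ y : ℝ, cexp (t * y * I) * gaussPDF m v y = cexp (t * m * I - v * t ^ 2 / 2) := by
  have hv' : (⟨v, hv.le⟩ : NNReal) ≠ 0 := fun h ↦ hv.ne' (congrArg Subtype.val h)
  calc ∫ y : ℝ, cexp (t * y * I) * gaussPDF m v y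
      = charFun (gaussianReal m ⟨v, hv.le⟩) t := by
        rw [charFun_apply_real, integral_gaussianReal_eq_integral_smul hv',
          gaussPDF_eq_gaussianPDFReal m hv.le]
        simp only [real_smul, mul_comm]
    _ = cexp (t * m * I - v * t ^ 2 / 2) := charFun_gaussianReal t

variable {ι : Type*} [Fintype ι]

lemma prod_cexp_mul_I_mul_ofReal (t w p : ι → ℝ) :
    ∏ i, cexp (t i * w i * I) * p i = cexp ((∑ i, w i * t i : ℝ) * I) * (∏ i, p i : ℝ) := by
  rw [Finset.prod_mul_distrib, ← Complex.exp_sum]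
  push_cast
  simp only [Finset.sum_mul, mul_comm (w _ : ℂ)]

lemma integral_cexp_mul_I_mul_prod_gaussPDF (m v t : ι → ℝ) (hv : ∀ i, 0 < v i) :
    ∫ w : ι → ℝ, ∏ i, cexp (t i * w i * I) * gaussPDF (m i) (v i) (w i) =
      cexp ((∑ i, m i * t i : ℝ) * I - (∑ i, v i * t i ^ 2 : ℝ) / 2) := by
  rw [integral_fintype_prod_volume_eq_prod
    (fun i (y : ℝ) ↦ cexp (t i * y * I) * gaussPDF (m i) (v i) y)]
  simp only [integral_cexp_mul_I_mul_gaussPDF _ (hv _), ← Complex.exp_sum]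
  push_cast
  congr 1
  rw [Finset.sum_mul, Finset.sum_div, ← Finset.sum_sub_distrib]
  exact Finset.sum_congr rfl fun i _ ↦ by ring

lemma integrable_cos_mul_prod_gaussPDF (m v t : ι → ℝ) (hv : ∀ i, 0 ≤ v i) :
    Integrable fun w : ι → ℝ ↦ Real.cos (∑ i, w i * t i) * ∏ i, gaussPDF (m i) (v i) (w i) :=
  (Integrable.fintype_prod fun i ↦ integrable_gaussPDF (m i) (hv i)).bdd_mul (c := 1)
    (by fun_prop : Continuous _).aestronglyMeasurable
    (ae_of_all _ fun _ ↦ by simpa using abs_cos_le_one _)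

lemma integral_cos_mul_prod_gaussPDF (m v t : ι → ℝ) (hv : ∀ i, 0 < v i) :
    ∫ w : ι → ℝ, Real.cos (∑ i, w i * t i) * ∏ i, gaussPDF (m i) (v i) (w i) =
      Real.exp (-(∑ i, v i * t i ^ 2) / 2) * Real.cos (∑ i, m i * t i) := by
  have hint :
      Integrable fun w : ι → ℝ ↦ ∏ i, cexp (t i * w i * I) * gaussPDF (m i) (v i) (w i) :=
    Integrable.fintype_prod fun i ↦ integrable_cexp_mul_I_mul_gaussPDF (m i) (hv i).le (t i)
  calc ∫ w : ι → ℝ, Real.cos (∑ i, w i * t i) * ∏ i, gaussPDF (m i) (v i) (w i)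
      = (∫ w : ι → ℝ, ∏ i, cexp (t i * w i * I) * gaussPDF (m i) (v i) (w i)).re := by
        rw [← RCLike.re_to_complex, ← integral_re hint]
        simp only [RCLike.re_to_complex, prod_cexp_mul_I_mul_ofReal, re_mul_ofReal,
          exp_ofReal_mul_I_re]
    _ = Real.exp (-(∑ i, v i * t i ^ 2) / 2) * Real.cos (∑ i, m i * t i) := by
        rw [integral_cexp_mul_I_mul_prod_gaussPDF m v t hv, exp_re]
        simp [neg_div, -ofReal_sum]

/-- For `w` distributed according to the symmetrized Gaussian density
`s(w) = ½ (N(w | μ, diag σ²) + N(−w | μ, diag σ²))` on `ℝ^Q`, one has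
`E[cos(2π wᵀ(x − x'))] = exp(−2π² ‖σ ⊙ (x − x')‖²) cos(2π μᵀ(x − x'))`. -/
theorem expectation_cos_symmetrized_gaussian {Q : ℕ}
    (μ v : Fin Q → ℝ) (hv : ∀ i, 0 < v i) (x x' : Fin Q → ℝ) :
    ∫ w : Fin Q → ℝ,
        Real.cos (2 * Real.pi * ∑ i, w i * (x i - x' i)) *
          ((1 / 2) * ((∏ i, gaussPDF (μ i) (v i) (w i)) +
            ∏ i, gaussPDF (μ i) (v i) (-(w i))))
      = Real.exp (-2 * Real.pi ^ 2 * ∑ i, v i * (x i - x' i) ^ 2) *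
          Real.cos (2 * Real.pi * ∑ i, μ i * (x i - x' i)) := by
  have hsum (a : Fin Q → ℝ) :
      2 * π * ∑ i, a i * (x i - x' i) = ∑ i, a i * (2 * π * (x i - x' i)) := by
    rw [Finset.mul_sum]
    exact Finset.sum_congr rfl fun i _ ↦ by ring
  simp only [hsum]
  have h := integral_mul_half_add_comp_neg_of_even (μ := volume)
    (f := fun w : Fin Q → ℝ ↦ Real.cos (∑ i, w i * (2 * π * (x i - x' i))))
    (p := fun w ↦ ∏ i, gaussPDF (μ i) (v i) (w i))
    (fun w ↦ by simp only [Pi.neg_apply, neg_mul, Finset.sum_neg_distrib, Real.cos_neg])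
    (integrable_cos_mul_prod_gaussPDF μ v _ fun i ↦ (hv i).le)
  simp only [Pi.neg_apply] at h
  rw [h, integral_cos_mul_prod_gaussPDF μ v _ hv]
  congr 2
  rw [Finset.mul_sum, ← Finset.sum_neg_distrib, Finset.sum_div]
  exact Finset.sum_congr rfl fun i _ ↦ by ring
end

section
/- Let Y ∈ ℝ^{N×M}, and let S = (1/M) Y Yᵀ with eigen-decomposition having eigenvalues λ_1 ≥ … ≥ λ_N ≥ 0 and orthonormal eigenvectors u_1, …, u_N. Fix σ² > 0 and Q ≤ N. Suppose X = U_Q (Λ_Q − σ² I_Q)^{1/2} R, where U_Q consists of Q of the eigenvectors, Λ_Q is diagonal with [Λ_Q]_{ii} equal to either the eigenvalue λ corresponding to the i-th chosen eigenvector (with λ ≥ σ²) or σ², and R is an orthogonal Q×Q matrix. Then X satisfies the stationarity equation (1/M) Y Yᵀ (X Xᵀ + σ² I_N)⁻¹ X = X. -/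
/-!
Write `X = U D R` with `D = diag(√(d - σ²))`, so that `X Xᵀ = U diag(d - σ²) Uᵀ` and
`K = X Xᵀ + σ² I` acts on the columns of `U` as `diag(d)`. Hence `K (U G R) = X` for
`G = diag(√(d - σ²) / d)`, and since `K` is positive definite, `K⁻¹ X = U G R`. Each column
of `U G` is either zero (when `d i = σ²`) or an eigenvector of `S` with eigenvalue `d i`,
so `S U G = U diag(d · √(d - σ²) / d) = U D`, i.e. `S K⁻¹ X = X`.
-/

namespace Matrix

variable {m n p α : Type*}

theorem isUnit_mul_transpose_add_smul_one [Fintype m] [Fintype n] [DecidableEq m]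
    (X : Matrix m n ℝ) {c : ℝ} (hc : 0 < c) : IsUnit (X * Xᵀ + c • (1 : Matrix m m ℝ)) :=
  (PosDef.posSemidef_add (posSemidef_self_mul_conjTranspose X) (PosDef.one.smul hc)).isUnit

section CommSemiring

variable [CommSemiring α] [Fintype n] [DecidableEq n]

theorem mul_diagonal_mul_mul_transpose [Fintype p] {U : Matrix m n α} {R : Matrix n p α}
    (hR : R * Rᵀ = 1) (s : n → α) :
    U * diagonal s * R * (U * diagonal s * R)ᵀ = U * diagonal (fun i => s i * s i) * Uᵀ := by
  simp only [transpose_mul, diagonal_transpose, Matrix.mul_assoc]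
  rw [← Matrix.mul_assoc R, hR, Matrix.one_mul, ← Matrix.mul_assoc (diagonal s),
    diagonal_mul_diagonal]

theorem mul_diagonal_mul_transpose_add_smul_one_mul [Fintype m] [DecidableEq m]
    {U : Matrix m n α} (hU : Uᵀ * U = 1) (a b : n → α) (c : α) :
    (U * diagonal a * Uᵀ + c • (1 : Matrix m m α)) * (U * diagonal b) =
      U * diagonal (fun i => (a i + c) * b i) := by
  rw [Matrix.add_mul, Matrix.mul_assoc, ← Matrix.mul_assoc Uᵀ, hU, Matrix.one_mul, smul_mul,
    Matrix.one_mul, Matrix.mul_assoc U, diagonal_mul_diagonal, ← Matrix.mul_smul,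
    ← Matrix.mul_add, ← diagonal_smul, diagonal_add]
  congr 2
  ext i
  simp only [Pi.smul_apply, smul_eq_mul]
  ring

theorem mul_mul_diagonal_of_mulVec_col_eq [Fintype m] {S : Matrix m m α} {U : Matrix m n α}
    {ev b : n → α} (h : ∀ i, b i = 0 ∨ S *ᵥ (fun j => U j i) = ev i • fun j => U j i) :
    S * (U * diagonal b) = U * diagonal (fun i => ev i * b i) := by
  ext j i
  rw [← Matrix.mul_assoc, mul_diagonal, mul_diagonal]
  rcases h i with hb | hev
  · simp [hb]
  · have hev_j := congrFun hev j
    simp only [mulVec, dotProduct, Pi.smul_apply, smul_eq_mul] at hev_j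
    rw [Matrix.mul_apply, hev_j]
    ring

end CommSemiring

end Matrix

open Matrix

theorem dppca_stationary_points_general {N M Q : ℕ}
    (Y : Matrix (Fin N) (Fin M) ℝ) (σ2 : ℝ) (hσ : 0 < σ2)
    (U : Matrix (Fin N) (Fin Q) ℝ) (hU : Uᵀ * U = 1)
    (d : Fin Q → ℝ)
    (hd : ∀ i, d i = σ2 ∨ (σ2 ≤ d i ∧
      ((1 / (M : ℝ)) • (Y * Yᵀ)) *ᵥ (fun j => U j i) = d i • (fun j => U j i)))
    (R : Matrix (Fin Q) (Fin Q) ℝ) (hR : Rᵀ * R = 1 ∧ R * Rᵀ = 1)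
    (X : Matrix (Fin N) (Fin Q) ℝ)
    (hX : X = U * Matrix.diagonal (fun i => Real.sqrt (d i - σ2)) * R) :
    ((1 / (M : ℝ)) • (Y * Yᵀ)) * (X * Xᵀ + σ2 • (1 : Matrix (Fin N) (Fin N) ℝ))⁻¹ * X = X := by
  set s : Fin Q → ℝ := fun i => Real.sqrt (d i - σ2)
  set g : Fin Q → ℝ := fun i => s i / d i
  have hd_ge (i : Fin Q) : σ2 ≤ d i := (hd i).elim (fun h => h.ge) And.left
  have hd_ne (i : Fin Q) : d i ≠ 0 := (hσ.trans_le (hd_ge i)).ne'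
  have hdg (i : Fin Q) : d i * g i = s i := mul_div_cancel₀ _ (hd_ne i)
  have hK : (X * Xᵀ + σ2 • 1) * (U * diagonal g * R) = X := by
    have hss (i : Fin Q) : s i * s i + σ2 = d i := by
      simp [s, Real.mul_self_sqrt (sub_nonneg.2 (hd_ge i))]
    rw [hX, mul_diagonal_mul_mul_transpose hR.2, ← Matrix.mul_assoc,
      mul_diagonal_mul_transpose_add_smul_one_mul hU]
    simp only [hss, hdg]
  have hKinv : (X * Xᵀ + σ2 • 1)⁻¹ * X = U * diagonal g * R := by
    calc _ = (X * Xᵀ + σ2 • 1)⁻¹ * ((X * Xᵀ + σ2 • 1) * (U * diagonal g * R)) := by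
          rw [hK]
      _ = _ := nonsing_inv_mul_cancel_left _ _
        ((isUnit_iff_isUnit_det _).mp (isUnit_mul_transpose_add_smul_one X hσ))
  have hcols (i : Fin Q) : g i = 0 ∨ ((1 / (M : ℝ)) • (Y * Yᵀ)) *ᵥ (fun j => U j i) =
      d i • fun j => U j i :=
    (hd i).imp (fun h => by simp [g, s, h]) And.right
  rw [Matrix.mul_assoc, hKinv, ← Matrix.mul_assoc, mul_mul_diagonal_of_mulVec_col_eq hcols]
  simp only [hdg, hX]

/-- Stationary points of the dual probabilistic PCA log-likelihood: if
`X = U_Q (Λ_Q − σ² I_Q)^{1/2} R` where the columns of `U_Q` are orthonormal, each diagonal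
entry `d i` of `Λ_Q` is either `σ²` or an eigenvalue `λ ≥ σ²` of `S = (1/M) Y Yᵀ` whose
eigenvector is the `i`-th column of `U_Q`, and `R` is orthogonal, then `X` satisfies the
stationarity equation `S (X Xᵀ + σ² I_N)⁻¹ X = X`. -/
theorem dppca_stationary_points {N M Q : ℕ} (hM : 0 < M)
    (Y : Matrix (Fin N) (Fin M) ℝ) (σ2 : ℝ) (hσ : 0 < σ2)
    (U : Matrix (Fin N) (Fin Q) ℝ) (hU : Uᵀ * U = 1)
    (d : Fin Q → ℝ)
    (hd : ∀ i, d i = σ2 ∨ (σ2 ≤ d i ∧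
      ((1 / (M : ℝ)) • (Y * Yᵀ)) *ᵥ (fun j => U j i) = d i • (fun j => U j i)))
    (R : Matrix (Fin Q) (Fin Q) ℝ) (hR : Rᵀ * R = 1 ∧ R * Rᵀ = 1)
    (X : Matrix (Fin N) (Fin Q) ℝ)
    (hX : X = U * Matrix.diagonal (fun i => Real.sqrt (d i - σ2)) * R) :
    ((1 / (M : ℝ)) • (Y * Yᵀ)) * (X * Xᵀ + σ2 • (1 : Matrix (Fin N) (Fin N) ℝ))⁻¹ * X = X :=
  dppca_stationary_points_general Y σ2 hσ U hU d hd R hR X hX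
end

section
/- Conversely, suppose X ∈ ℝ^{N×Q} satisfies (1/M) Y Yᵀ (X Xᵀ + σ² I_N)⁻¹ X = X with σ² > 0, and let X = U L Vᵀ be a singular value decomposition with singular values l_1, …, l_Q. Then for each i with l_i ≠ 0, the left singular vector u_i is an eigenvector of (1/M) Y Yᵀ with eigenvalue σ² + l_i². -/
open Matrix

/-- Converse characterization of DPPCA stationary points: if `X = U L Vᵀ` (SVD with `U` having
orthonormal columns, `L = diag(l)` and `V` orthogonal) satisfies
`(1/M) Y Yᵀ (X Xᵀ + σ² I_N)⁻¹ X = X` with `σ² > 0`, then for each `i` with `l i ≠ 0` the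
left singular vector `u_i` is an eigenvector of `(1/M) Y Yᵀ` with eigenvalue `σ² + l_i²`. -/
theorem dppca_stationary_converse {N M Q : ℕ} (hM : 0 < M)
    (Y : Matrix (Fin N) (Fin M) ℝ) (σ2 : ℝ) (hσ : 0 < σ2)
    (U : Matrix (Fin N) (Fin Q) ℝ) (hU : Uᵀ * U = 1)
    (l : Fin Q → ℝ) (V : Matrix (Fin Q) (Fin Q) ℝ) (hV : Vᵀ * V = 1 ∧ V * Vᵀ = 1)
    (X : Matrix (Fin N) (Fin Q) ℝ)
    (hX : X = U * Matrix.diagonal l * Vᵀ)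
    (hstat : ((1 / (M : ℝ)) • (Y * Yᵀ)) *
        (X * Xᵀ + σ2 • (1 : Matrix (Fin N) (Fin N) ℝ))⁻¹ * X = X) :
    ∀ i, l i ≠ 0 →
      ((1 / (M : ℝ)) • (Y * Yᵀ)) *ᵥ (fun j => U j i) =
        (σ2 + (l i) ^ 2) • (fun j => U j i) := by
  intro i hli
  set S : Matrix (Fin N) (Fin N) ℝ := (1 / (M : ℝ)) • (Y * Yᵀ) with hS
  set A : Matrix (Fin N) (Fin N) ℝ := X * Xᵀ + σ2 • (1 : Matrix (Fin N) (Fin N) ℝ) with hA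
  set u : Fin N → ℝ := fun j => U j i with hu
  -- A is positive definite, hence invertible
  have hXXt : (X * Xᵀ).PosSemidef := by
    have := Matrix.posSemidef_self_mul_conjTranspose X
    rwa [Matrix.conjTranspose_eq_transpose_of_trivial] at this
  have hσ1 : (σ2 • (1 : Matrix (Fin N) (Fin N) ℝ)).PosDef := by
    rw [Matrix.smul_one_eq_diagonal]
    exact Matrix.PosDef.diagonal fun _ => hσ
  have hApd : A.PosDef := Matrix.PosDef.posSemidef_add hXXt hσ1
  have hAunit : IsUnit A.det := hApd.det_pos.ne'.isUnit
  -- X * Xᵀ = U * diagonal (l^2) * Uᵀ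
  have hXXt2 : X * Xᵀ = U * Matrix.diagonal (fun k => l k ^ 2) * Uᵀ := by
    rw [hX]
    rw [Matrix.transpose_mul, Matrix.transpose_mul, Matrix.transpose_transpose,
      Matrix.diagonal_transpose]
    calc U * Matrix.diagonal l * Vᵀ * (V * (Matrix.diagonal l * Uᵀ))
        = U * Matrix.diagonal l * (Vᵀ * V) * (Matrix.diagonal l * Uᵀ) := by
          simp only [Matrix.mul_assoc]
      _ = U * (Matrix.diagonal l * Matrix.diagonal l) * Uᵀ := by
          rw [hV.1, Matrix.mul_one]; simp only [Matrix.mul_assoc]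
      _ = U * Matrix.diagonal (fun k => l k ^ 2) * Uᵀ := by
          rw [Matrix.diagonal_mul_diagonal]
          congr 1
          ext k; ring_nf
  -- Uᵀ *ᵥ u = e_i
  have hUtu : Uᵀ *ᵥ u = (Pi.single i (1:ℝ)) := by
    ext k
    have : (Uᵀ * U) k i = (1 : Matrix (Fin Q) (Fin Q) ℝ) k i := by rw [hU]
    simpa [Matrix.mulVec, Matrix.mul_apply, dotProduct, Matrix.one_apply,
      Pi.single_apply, eq_comm] using this
  -- A *ᵥ u = c • u with c = σ2 + l i ^ 2
  set c : ℝ := σ2 + l i ^ 2 with hc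
  have hUe : U *ᵥ (Pi.single i (1:ℝ)) = u := by
    ext j; simp [Matrix.mulVec_single, u]
  have hAu : A *ᵥ u = c • u := by
    rw [hA, Matrix.add_mulVec, hXXt2, Matrix.smul_mulVec, Matrix.one_mulVec,
      ← Matrix.mulVec_mulVec, ← Matrix.mulVec_mulVec, hUtu]
    have h3 : Matrix.diagonal (fun k => l k ^ 2) *ᵥ (Pi.single i (1:ℝ)) = Pi.single i (l i ^ 2) := by
      ext k
      by_cases hk : k = i <;> simp [Matrix.mulVec_diagonal, Pi.single_apply, hk]
    rw [h3, Matrix.mulVec_single, hc]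
    ext j
    simp [u, add_smul, add_comm, mul_comm]
    ring
  have hcpos : 0 < c := by positivity
  -- A⁻¹ *ᵥ u = c⁻¹ • u
  have hAinv : A⁻¹ *ᵥ u = c⁻¹ • u := by
    have h1 : A⁻¹ *ᵥ (A *ᵥ u) = u := by
      rw [Matrix.mulVec_mulVec, Matrix.nonsing_inv_mul A hAunit, Matrix.one_mulVec]
    rw [hAu, Matrix.mulVec_smul] at h1
    rw [eq_comm, inv_smul_eq_iff₀ hcpos.ne']
    exact h1.symm
  -- column extraction from hstat: S *ᵥ (A⁻¹ *ᵥ u) = u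
  have hXw : X *ᵥ (V *ᵥ (Pi.single i (1:ℝ))) = l i • u := by
    rw [Matrix.mulVec_mulVec, hX]
    have : U * Matrix.diagonal l * Vᵀ * V = U * Matrix.diagonal l := by
      rw [Matrix.mul_assoc, hV.1, Matrix.mul_one]
    rw [this, ← Matrix.mulVec_mulVec]
    have h4 : Matrix.diagonal l *ᵥ (Pi.single i (1:ℝ)) = Pi.single i (l i) := by
      ext k
      by_cases hk : k = i <;> simp [Matrix.mulVec_diagonal, Pi.single_apply, hk]
    rw [h4, Matrix.mulVec_single]
    ext j
    simp [u, mul_comm]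
  have hstatv : S *ᵥ (A⁻¹ *ᵥ (l i • u)) = l i • u := by
    have := congrArg (fun T => T *ᵥ (V *ᵥ (Pi.single i (1:ℝ)))) hstat
    simpa only [← Matrix.mulVec_mulVec, hXw] using this
  rw [Matrix.mulVec_smul, hAinv, smul_smul, Matrix.mulVec_smul] at hstatv
  have key : (c * (l i)⁻¹) * (l i * c⁻¹) = 1 := by field_simp
  have h2 : S *ᵥ u = (c * (l i)⁻¹) • ((l i * c⁻¹) • (S *ᵥ u)) := by
    rw [smul_smul, key, one_smul]
  rw [h2, hstatv, smul_smul]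
  congr 1
  field_simp
end

section
/- Let σ² > 0, X ∈ ℝ^{N×Q}, K = X Xᵀ + σ² I_N, and Y ∈ ℝ^{N×M}. The gradient of L(X) = M·(−(N/2)log 2π − (1/2)log det(K)) − (1/2) tr(K⁻¹ Y Yᵀ) with respect to X equals K⁻¹ Y Yᵀ K⁻¹ X − M K⁻¹ X. -/
/-! Both terms are differentiated along `K(t) = (X + tH)(X + tH)ᵀ + σ² I`, whose velocity at `0` is
`B = XHᵀ + HXᵀ`. Jacobi's formula gives `(log det K)' = tr(K⁻¹B)`: `det` is a polynomial in the
entries, hence differentiable, so its derivative in direction `B` can be read off the line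
`det(A + tB) = det A · det(1 + t A⁻¹B)`, whose derivative at `0` is `det A · tr(A⁻¹B)`. The
derivative of the inverse gives `tr(K⁻¹ YYᵀ)' = -tr(K⁻¹BK⁻¹YYᵀ)`. Finally, for symmetric `G`,
`tr(G B) = 2 tr((GX)ᵀH)` turns both into pairings with `H`. -/

open Matrix Polynomial
-- Any norm gives the same derivatives; the operator norm makes square matrices a normed algebra,
-- as the derivative of `Ring.inverse` requires.
open scoped Matrix.Norms.Operator

namespace Matrix

variable {𝕜 m n : Type*} [Fintype n]

theorem trace_mul_add_transpose {R : Type*} [CommRing R] [Fintype m] {G : Matrix m m R}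
    (hG : G.IsSymm) (X H : Matrix m n R) :
    trace (G * (X * Hᵀ + H * Xᵀ)) = 2 * trace ((G * X)ᵀ * H) := by
  have h1 : trace (G * (H * Xᵀ)) = trace ((G * X)ᵀ * H) := by
    rw [transpose_mul, hG.eq, ← Matrix.mul_assoc, trace_mul_comm, Matrix.mul_assoc]
  have h2 : trace (G * (X * Hᵀ)) = trace (G * (H * Xᵀ)) := by
    rw [← trace_transpose, transpose_mul, transpose_mul, transpose_transpose, hG.eq,
      trace_mul_comm]
  rw [Matrix.mul_add, trace_add, h2, h1, two_mul]

theorem trace_mul_add_transpose_mul_mul {R : Type*} [CommRing R] [Fintype m] {G P : Matrix m m R}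
    (hG : G.IsSymm) (hP : P.IsSymm) (X H : Matrix m n R) :
    trace (G * (X * Hᵀ + H * Xᵀ) * G * P) = 2 * trace ((G * P * G * X)ᵀ * H) := by
  have hGPG : (G * P * G).IsSymm := by
    simp [IsSymm, transpose_mul, hG.eq, hP.eq, Matrix.mul_assoc]
  rw [← trace_mul_add_transpose hGPG, Matrix.mul_assoc, trace_mul_comm]
  simp only [Matrix.mul_assoc]

theorem _root_.HasDerivAt.matrix_trace [NontriviallyNormedField 𝕜] [CompleteSpace 𝕜]
    {A : 𝕜 → Matrix n n 𝕜} {A' : Matrix n n 𝕜} {t : 𝕜} (hA : HasDerivAt A A' t) :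
    HasDerivAt (fun s => trace (A s)) (trace A') t :=
  (LinearMap.toContinuousLinearMap (traceLinearMap n 𝕜 𝕜)).hasFDerivAt.comp_hasDerivAt t hA

theorem hasDerivAt_add_smul_mul_transpose_add_smul [NontriviallyNormedField 𝕜] [Fintype m]
    (X H : Matrix m n 𝕜) :
    HasDerivAt (fun t : 𝕜 => (X + t • H) * (X + t • H)ᵀ) (X * Hᵀ + H * Xᵀ) 0 := by
  have hexpand : ∀ t : 𝕜, (X + t • H) * (X + t • H)ᵀ =
      X * Xᵀ + t • (X * Hᵀ + H * Xᵀ) + t ^ 2 • (H * Hᵀ) := by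
    intro t
    simp only [transpose_add, transpose_smul, Matrix.add_mul, Matrix.mul_add, Matrix.smul_mul,
      Matrix.mul_smul, pow_two]
    module
  rw [funext hexpand]
  refine HasDerivAt.congr_deriv (((hasDerivAt_const 0 (X * Xᵀ)).add
    ((hasDerivAt_id' 0).smul_const (X * Hᵀ + H * Xᵀ))).add
    ((hasDerivAt_pow 2 0).smul_const (H * Hᵀ))) ?_
  simp

variable [DecidableEq n]

section NontriviallyNormedField

variable [NontriviallyNormedField 𝕜]

theorem differentiable_det : Differentiable 𝕜 (det : Matrix n n 𝕜 → 𝕜) := by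
  change Differentiable 𝕜 fun M : Matrix n n 𝕜 => M.det
  simp only [det_apply']
  fun_prop

theorem hasDerivAt_det_add_smul {A : Matrix n n 𝕜} (hA : IsUnit A) (B : Matrix n n 𝕜) :
    HasDerivAt (fun t : 𝕜 => det (A + t • B)) (det A * trace (A⁻¹ * B)) 0 := by
  set p : 𝕜[X] := det (1 + (X : 𝕜[X]) • (A⁻¹ * B).map C)
  have hfactor : ∀ t : 𝕜, det (A + t • B) = det A * p.eval t := by
    intro t
    have heval : (evalRingHom t).mapMatrix (1 + (X : 𝕜[X]) • (A⁻¹ * B).map C) =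
        1 + t • (A⁻¹ * B) := by
      ext i j
      simp [RingHom.mapMatrix_apply, one_apply, apply_ite (eval t), mul_comm t, -Matrix.map_mul]
    rw [← coe_evalRingHom, RingHom.map_det, ← det_mul, heval, Matrix.mul_add, Matrix.mul_one,
      Matrix.mul_smul, mul_nonsing_inv_cancel_left _ _ ((isUnit_iff_isUnit_det A).mp hA)]
  rw [funext hfactor, ← derivative_det_one_add_X_smul]
  exact (p.hasDerivAt 0).const_mul (det A)

theorem _root_.HasDerivAt.matrix_det {A : 𝕜 → Matrix n n 𝕜} {A' : Matrix n n 𝕜} {t : 𝕜}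
    (hA : HasDerivAt A A' t) (hunit : IsUnit (A t)) :
    HasDerivAt (fun s => det (A s)) (det (A t) * trace ((A t)⁻¹ * A')) t := by
  have hdet := (differentiable_det (A t)).hasFDerivAt
  have hline : HasDerivAt (fun s : 𝕜 => A t + s • A') A' 0 := by
    have := ((hasDerivAt_id' (0 : 𝕜)).smul_const A').const_add (A t)
    rwa [one_smul] at this
  have hjacobi : fderiv 𝕜 det (A t) A' = det (A t) * trace ((A t)⁻¹ * A') :=
    (hdet.comp_hasDerivAt_of_eq 0 hline (by simp)).unique (hasDerivAt_det_add_smul hunit A')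
  rw [← hjacobi]
  exact hdet.comp_hasDerivAt t hA

end NontriviallyNormedField

theorem _root_.HasDerivAt.matrix_inv [RCLike 𝕜] {A : 𝕜 → Matrix n n 𝕜} {A' : Matrix n n 𝕜}
    {t : 𝕜} (hA : HasDerivAt A A' t) (hunit : IsUnit (A t)) :
    HasDerivAt (fun s => (A s)⁻¹) (-((A t)⁻¹ * A' * (A t)⁻¹)) t := by
  obtain ⟨u, hu⟩ := hunit
  have := (hasFDerivAt_ringInverse (𝕜 := 𝕜) u).comp_hasDerivAt_of_eq t hA hu
  simp_rw [nonsing_inv_eq_ringInverse, ← hu, Ring.inverse_unit]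
  exact this

end Matrix

/-- Gradient of the DPPCA log marginal likelihood
`L(X) = M (−(N/2) log 2π − (1/2) log det K) − (1/2) tr(K⁻¹ Y Yᵀ)` with
`K = X Xᵀ + σ² I_N`: the directional derivative of `L` at `X` in any direction `H` equals
`tr((K⁻¹ Y Yᵀ K⁻¹ X − M K⁻¹ X)ᵀ H)`, i.e. the gradient is `K⁻¹ Y Yᵀ K⁻¹ X − M K⁻¹ X`. -/
theorem dppca_loglik_gradient {N M Q : ℕ} (σ2 : ℝ) (hσ : 0 < σ2)
    (X H : Matrix (Fin N) (Fin Q) ℝ) (Y : Matrix (Fin N) (Fin M) ℝ) :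
    HasDerivAt
      (fun t : ℝ =>
        (M : ℝ) * (-(N / 2 : ℝ) * Real.log (2 * Real.pi) -
            (1 / 2) * Real.log ((X + t • H) * (X + t • H)ᵀ +
              σ2 • (1 : Matrix (Fin N) (Fin N) ℝ)).det) -
          (1 / 2) * (((X + t • H) * (X + t • H)ᵀ +
              σ2 • (1 : Matrix (Fin N) (Fin N) ℝ))⁻¹ * (Y * Yᵀ)).trace)
      ((((X * Xᵀ + σ2 • (1 : Matrix (Fin N) (Fin N) ℝ))⁻¹ * (Y * Yᵀ) *
            (X * Xᵀ + σ2 • (1 : Matrix (Fin N) (Fin N) ℝ))⁻¹ * X -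
          (M : ℝ) • ((X * Xᵀ + σ2 • (1 : Matrix (Fin N) (Fin N) ℝ))⁻¹ * X))ᵀ * H).trace)
      0 := by
  set K := X * Xᵀ + σ2 • (1 : Matrix (Fin N) (Fin N) ℝ) with hKdef
  have hKpos : K.PosDef :=
    PosDef.posSemidef_add (by simpa using posSemidef_self_mul_conjTranspose X) (PosDef.one.smul hσ)
  have hKinv : K⁻¹.IsSymm := (isHermitian_iff_isSymm.mp hKpos.isHermitian).inv
  have hYY : (Y * Yᵀ).IsSymm := by rw [IsSymm, transpose_mul, transpose_transpose]
  have hpath : HasDerivAt (fun t : ℝ => (X + t • H) * (X + t • H)ᵀ + σ2 • 1)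
      (X * Hᵀ + H * Xᵀ) 0 :=
    (hasDerivAt_add_smul_mul_transpose_add_smul X H).add_const _
  have hlogdet := (hpath.matrix_det (by simpa using hKpos.isUnit)).log (by simpa using hKpos.det_pos.ne')
  have htrace := ((hpath.matrix_inv (by simpa using hKpos.isUnit)).mul_const (Y * Yᵀ)).matrix_trace
  simp only [zero_smul, add_zero, ← hKdef] at hlogdet htrace
  refine HasDerivAt.congr_deriv
    ((((hlogdet.const_mul (1 / 2)).const_sub (-(N / 2 : ℝ) * Real.log (2 * Real.pi))).const_mul
      (M : ℝ)).sub (htrace.const_mul (1 / 2))) ?_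
  rw [mul_div_cancel_left₀ _ hKpos.det_pos.ne', Matrix.neg_mul, trace_neg,
    trace_mul_add_transpose hKinv,
    trace_mul_add_transpose_mul_mul hKinv hYY,
    transpose_sub, Matrix.sub_mul, trace_sub, transpose_smul, Matrix.smul_mul, trace_smul,
    smul_eq_mul]
  ring
end

section
/- Let λ_1 ≥ λ_2 ≥ … ≥ λ_N > 0 and fix Q < N. Among all choices of a subset D ⊆ {1,…,N} of discarded indices with |D| = N − Q that minimize E(D) = log((1/|D|) Σ_{j∈D} λ_j) − (1/|D|) Σ_{j∈D} log λ_j subject to the constraint that λ_i > (1/|D|) Σ_{j∈D} λ_j for every retained index i ∉ D, the set D = {Q+1, …, N} (discarding the N−Q smallest eigenvalues) achieves the minimum. -/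
open Finset

lemma swap_log_ineq {m : ℕ} (hm : 0 < m) {S x y : ℝ} (hy : 0 < y) (hyx : y ≤ x)
    (hxS : x ≤ S) (hmean : S < m * y) :
    Real.log (S - x + y) - (1 / m) * Real.log y ≤ Real.log S - (1 / m) * Real.log x := by
  have hx : 0 < x := hy.trans_le hyx
  have hS : 0 < S := hx.trans_le hxS
  have ha : 0 < S - x + y := by linarith
  have hm' : (0:ℝ) < m := by exact_mod_cast hm
  have h1 : Real.log x - Real.log y ≤ (x - y) / y := by
    rw [← Real.log_div hx.ne' hy.ne']
    have h := Real.log_le_sub_one_of_pos (x := x / y) (by positivity)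
    have e : x / y - 1 = (x - y) / y := by field_simp
    linarith [e ▸ h]
  have h3 : Real.log (S - x + y) - Real.log S ≤ (y - x) / S := by
    rw [← Real.log_div ha.ne' hS.ne']
    have h := Real.log_le_sub_one_of_pos (x := (S - x + y) / S) (by positivity)
    have e : (S - x + y) / S - 1 = (y - x) / S := by field_simp; ring
    linarith [e ▸ h]
  have h2 : (y - x) / S ≤ (y - x) / (m * y) := by
    rw [div_le_div_iff₀ hS (by positivity)]
    nlinarith
  have h4 : (y - x) / (m * y) ≤ (1 / m) * (Real.log y - Real.log x) := by
    have e : (y - x) / (m * y) = (1 / m) * ((y - x) / y) := by field_simp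
    rw [e]
    apply mul_le_mul_of_nonneg_left _ (by positivity)
    have e2 : (y - x) / y = -((x - y) / y) := by ring
    linarith [e2]
  linarith

lemma aux_induction {N : ℕ} (Q : ℕ) (hQ : Q < N)
    (lam : Fin N → ℝ) (hpos : ∀ i, 0 < lam i) (hmono : Antitone lam) :
    ∀ n (D : Finset (Fin N)),
      (D \ Finset.univ.filter (fun i : Fin N => Q ≤ (i : ℕ))).card = n →
      D.card = N - Q →
      (∀ i ∉ D, (1 / (D.card : ℝ)) * ∑ j ∈ D, lam j < lam i) →
      Real.log ((1 / ((N - Q : ℕ) : ℝ)) *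
            ∑ j ∈ Finset.univ.filter (fun i : Fin N => Q ≤ (i : ℕ)), lam j) -
          (1 / ((N - Q : ℕ) : ℝ)) *
            ∑ j ∈ Finset.univ.filter (fun i : Fin N => Q ≤ (i : ℕ)), Real.log (lam j) ≤
        Real.log ((1 / (D.card : ℝ)) * ∑ j ∈ D, lam j) -
          (1 / (D.card : ℝ)) * ∑ j ∈ D, Real.log (lam j) := by
  set D₀ := Finset.univ.filter (fun i : Fin N => Q ≤ (i : ℕ)) with hD₀def
  have hD₀eq : D₀ = Finset.Ici (⟨Q, hQ⟩ : Fin N) := by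
    ext i; simp [hD₀def, Fin.le_def]
  have hD₀card : D₀.card = N - Q := by rw [hD₀eq, Fin.card_Ici]
  intro n
  induction n with
  | zero =>
    intro D hsd hcard _
    have hsub : D ⊆ D₀ := by
      rwa [Finset.card_eq_zero, Finset.sdiff_eq_empty_iff_subset] at hsd
    have : D = D₀ := Finset.eq_of_subset_of_card_le hsub (by omega)
    rw [this, hD₀card]
  | succ n ih =>
    intro D hsd hcard hconstr
    have hmpos : 0 < N - Q := by omega
    have hm' : (0:ℝ) < ((N - Q : ℕ) : ℝ) := by exact_mod_cast hmpos
    -- pick i ∈ D \ D₀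
    obtain ⟨i, hi⟩ : (D \ D₀).Nonempty := Finset.card_pos.mp (by omega)
    have hiD : i ∈ D := (Finset.mem_sdiff.mp hi).1
    have hiQ : (i : ℕ) < Q := by
      have := (Finset.mem_sdiff.mp hi).2
      simp [hD₀def] at this; omega
    -- pick k ∈ D₀ \ D
    have hcomm : (D₀ \ D).card = (D \ D₀).card := by
      rw [Finset.card_sdiff_comm (by omega)]
    obtain ⟨k, hk⟩ : (D₀ \ D).Nonempty := Finset.card_pos.mp (by omega)
    have hkD : k ∉ D := (Finset.mem_sdiff.mp hk).2
    have hkQ : Q ≤ (k : ℕ) := by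
      have := (Finset.mem_sdiff.mp hk).1
      simpa [hD₀def] using this
    have hik : i ≤ k := by rw [Fin.le_def]; omega
    have hyx : lam k ≤ lam i := hmono hik
    set S := ∑ j ∈ D, lam j with hSdef
    set L := ∑ j ∈ D, Real.log (lam j) with hLdef
    have hmean : S < ((N - Q : ℕ) : ℝ) * lam k := by
      have := hconstr k hkD
      rw [hcard] at this
      rw [div_mul_eq_mul_div, one_mul, div_lt_iff₀ hm'] at this
      linarith [this]
    have hxS : lam i ≤ S := Finset.single_le_sum (fun j _ => (hpos j).le) hiD
    have hSpos : 0 < S := lt_of_lt_of_le (hpos i) hxS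
    -- the swapped set
    set D' := insert k (D.erase i) with hD'def
    have hknotin : k ∉ D.erase i := fun h => hkD (Finset.mem_of_mem_erase h)
    have hD'card : D'.card = N - Q := by
      rw [hD'def, Finset.card_insert_of_notMem hknotin, Finset.card_erase_of_mem hiD]
      omega
    have hD'sum : ∑ j ∈ D', lam j = S - lam i + lam k := by
      rw [hD'def, Finset.sum_insert hknotin, Finset.sum_erase_eq_sub hiD]; ring
    have hD'log : ∑ j ∈ D', Real.log (lam j) = L - Real.log (lam i) + Real.log (lam k) := by
      rw [hD'def, Finset.sum_insert hknotin, Finset.sum_erase_eq_sub hiD]; ring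
    have hD'sd : (D' \ D₀).card = n := by
      have : D' \ D₀ = (D \ D₀).erase i := by
        ext j
        simp only [hD'def, Finset.mem_sdiff, Finset.mem_insert, Finset.mem_erase]
        constructor
        · rintro ⟨hj1 | hj2, hj3⟩
          · exact absurd ((Finset.mem_sdiff.mp hk).1) (hj1 ▸ hj3)
          · exact ⟨hj2.1, hj2.2, hj3⟩
        · rintro ⟨hne, hjD, hjD₀⟩
          exact ⟨Or.inr ⟨hne, hjD⟩, hjD₀⟩
      rw [this, Finset.card_erase_of_mem hi, hsd]; omega
    have hconstr' : ∀ j ∉ D', (1 / (D'.card : ℝ)) * ∑ l ∈ D', lam l < lam j := by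
      intro j hj
      rw [hD'card, hD'sum]
      have hle : (1 / ((N - Q : ℕ) : ℝ)) * (S - lam i + lam k) ≤ (1 / ((N - Q : ℕ) : ℝ)) * S := by
        apply mul_le_mul_of_nonneg_left _ (by positivity)
        linarith
      have hSm : (1 / ((N - Q : ℕ) : ℝ)) * S < lam k := by
        rw [div_mul_eq_mul_div, one_mul, div_lt_iff₀ hm']
        linarith
      rcases eq_or_ne j i with rfl | hji
      · calc (1 / ((N - Q : ℕ) : ℝ)) * (S - lam j + lam k) ≤ (1 / ((N - Q : ℕ) : ℝ)) * S := hle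
          _ < lam k := hSm
          _ ≤ lam j := hyx
      · have hjD : j ∉ D := by
          intro hjD
          exact hj (by simp [hD'def, Finset.mem_erase, hji, hjD])
        have := hconstr j hjD
        rw [hcard] at this
        calc (1 / ((N - Q : ℕ) : ℝ)) * (S - lam i + lam k) ≤ (1 / ((N - Q : ℕ) : ℝ)) * S := hle
          _ < lam j := this
    have hIH := ih D' hD'sd hD'card hconstr'
    rw [hD'card, hD'sum, hD'log] at hIH
    rw [hcard]
    refine hIH.trans ?_
    -- E(D') ≤ E(D) via swap_log_ineq
    have hswap := swap_log_ineq hmpos (hpos k) hyx hxS hmean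
    have hapos : 0 < S - lam i + lam k := by linarith [hpos k, hyx]
    rw [Real.log_mul (by positivity) hapos.ne', Real.log_mul (by positivity) hSpos.ne']
    have e1 : 1 / ((N - Q : ℕ) : ℝ) * (L - Real.log (lam i) + Real.log (lam k)) =
        1 / ((N - Q : ℕ) : ℝ) * L - 1 / ((N - Q : ℕ) : ℝ) * Real.log (lam i)
          + 1 / ((N - Q : ℕ) : ℝ) * Real.log (lam k) := by ring
    rw [e1]
    linarith [hswap]

/-- Retaining the principal eigenvalues is optimal: for `λ_1 ≥ … ≥ λ_N > 0` and `Q < N`,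
among all discarded index sets `D` of cardinality `N − Q` satisfying the constraint that
every retained eigenvalue exceeds the mean of the discarded ones, the set of the `N − Q`
smallest eigenvalues (the last indices) minimizes
`E(D) = log((1/|D|) Σ_{j∈D} λ_j) − (1/|D|) Σ_{j∈D} log λ_j`. -/
theorem discard_smallest_eigenvalues_optimal {N : ℕ} (Q : ℕ) (hQ : Q < N)
    (lam : Fin N → ℝ) (hpos : ∀ i, 0 < lam i) (hmono : Antitone lam)
    (D : Finset (Fin N)) (hcard : D.card = N - Q)
    (hconstr : ∀ i ∉ D, (1 / (D.card : ℝ)) * ∑ j ∈ D, lam j < lam i) :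
    Real.log ((1 / ((N - Q : ℕ) : ℝ)) *
          ∑ j ∈ Finset.univ.filter (fun i : Fin N => Q ≤ (i : ℕ)), lam j) -
        (1 / ((N - Q : ℕ) : ℝ)) *
          ∑ j ∈ Finset.univ.filter (fun i : Fin N => Q ≤ (i : ℕ)), Real.log (lam j) ≤
      Real.log ((1 / (D.card : ℝ)) * ∑ j ∈ D, lam j) -
        (1 / (D.card : ℝ)) * ∑ j ∈ D, Real.log (lam j) := by
  exact aux_induction Q hQ lam hpos hmono
    (D \ Finset.univ.filter (fun i : Fin N => Q ≤ (i : ℕ))).card D rfl hcard hconstr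
end

section
/- Suppose σ² > λ_1, where λ_1 is the largest eigenvalue of S = (1/M) Y Yᵀ. Then among all stationary points X of the DPPCA log-likelihood (i.e., solutions of S (X Xᵀ + σ² I_N)⁻¹ X = X), the only one for which the function does not increase to first order along any eigen-direction perturbation is X = 0. Equivalently: for any stationary point X ≠ 0 of the given form X = U_Q(Λ_Q − σ² I_Q)^{1/2}R, the constraint [Λ_Q]_{ii} ≥ σ² > λ_1 contradicts [Λ_Q]_{ii} being an eigenvalue of S, so every nonzero column is impossible; hence X = 0. -/
open Matrix

/-- Model collapse when the projection variance exceeds the top eigenvalue: if `σ²` is larger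
than every eigenvalue of `S = (1/M) Y Yᵀ`, then any stationary point of the DPPCA likelihood
of the form `X = U_Q (Λ_Q − σ² I_Q)^{1/2} R` — where `U_Q` has orthonormal columns, each
diagonal entry of `Λ_Q` either equals `σ²` or is an eigenvalue `λ ≥ σ²` of `S` with the
corresponding column of `U_Q` an eigenvector, and `R` is orthogonal — must be `X = 0`. -/
theorem dppca_collapse_of_large_variance {N M Q : ℕ} (hM : 0 < M)
    (Y : Matrix (Fin N) (Fin M) ℝ) (σ2 : ℝ) (hσ : 0 < σ2)
    (htop : ∀ (lam : ℝ) (v : Fin N → ℝ), v ≠ 0 →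
      ((1 / (M : ℝ)) • (Y * Yᵀ)) *ᵥ v = lam • v → lam < σ2)
    (U : Matrix (Fin N) (Fin Q) ℝ) (hU : Uᵀ * U = 1)
    (d : Fin Q → ℝ)
    (hd : ∀ i, d i = σ2 ∨ (σ2 ≤ d i ∧
      ((1 / (M : ℝ)) • (Y * Yᵀ)) *ᵥ (fun j => U j i) = d i • (fun j => U j i)))
    (R : Matrix (Fin Q) (Fin Q) ℝ) (hR : Rᵀ * R = 1 ∧ R * Rᵀ = 1)
    (X : Matrix (Fin N) (Fin Q) ℝ)
    (hX : X = U * Matrix.diagonal (fun i => Real.sqrt (d i - σ2)) * R) :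
    X = 0 := by
  have hdall : ∀ i, d i = σ2 := by
    intro i
    rcases hd i with h | ⟨hle, heig⟩
    · exact h
    · exfalso
      have hv : (fun j => U j i) ≠ 0 := by
        intro h0
        have h1 : (Uᵀ * U) i i = (1 : Matrix (Fin Q) (Fin Q) ℝ) i i := by rw [hU]
        simp only [Matrix.mul_apply, Matrix.transpose_apply, Matrix.one_apply_eq] at h1
        have : ∀ j, U j i = 0 := fun j => congrFun h0 j
        simp [this] at h1
      exact absurd (htop (d i) _ hv heig) (not_lt.mpr hle)
  have hdiag : Matrix.diagonal (fun i => Real.sqrt (d i - σ2)) = 0 := by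
    ext i j
    rcases eq_or_ne i j with rfl | hij
    · simp [hdall i]
    · simp [Matrix.diagonal_apply_ne _ hij]
  rw [hX, hdiag, Matrix.mul_zero, Matrix.zero_mul]
end
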